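/- Let Π be a reflection positive projection on H_- ⊗ H_+, and define E : B(H_+) → B(H_+) by E(X) = Tr(Π)⁻¹ Tr_{H_-}(Π (Θ(X†) ⊗ I)). Then for any orthonormal basis {|φ_i⟩} of the range of Π, E(X) = Tr(Π)⁻¹ Σ_i O(φ_i) X O(φ_i)†; in particular E is a symmetric completely positive map. -/

import Mathlib

open Matrix Kronecker BigOperators
open scoped ComplexOrder

/-- The canonical identification `O : H₋ ⊗ H₊ → B(H₊)`. -/
def Omap {n : ℕ} (ζ : Fin n × Fin n → ℂ) : Matrix (Fin n) (Fin n) ℂ :=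
  Matrix.of fun b a => ζ (a, b)

/-- The anti-linear *-isomorphism `Θ(X) = θ̂ X θ̂⁻¹` (entrywise conjugation). -/
def thetaMap {n : ℕ} (X : Matrix (Fin n) (Fin n) ℂ) : Matrix (Fin n) (Fin n) ℂ :=
  X.map (starRingEnd ℂ)

/-- Reflection positivity: `Tr(T (Θ(X) ⊗ X)) ≥ 0` for all `X`. -/
def IsRP {n : ℕ} (T : Matrix (Fin n × Fin n) (Fin n × Fin n) ℂ) : Prop :=
  ∀ X : Matrix (Fin n) (Fin n) ℂ, 0 ≤ (T * (thetaMap X ⊗ₖ X)).trace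

/-- Partial trace over the first (`H₋`) tensor factor. -/
noncomputable def ptraceL {n : ℕ} (M : Matrix (Fin n × Fin n) (Fin n × Fin n) ℂ) :
    Matrix (Fin n) (Fin n) ℂ :=
  Matrix.of fun b b' => ∑ a, M (a, b) (a, b')

/-- The map `E(X) = Tr(Π)⁻¹ Tr_{H₋}(Π (Θ(X†) ⊗ I))`. -/
noncomputable def Emap {n : ℕ} (Pr : Matrix (Fin n × Fin n) (Fin n × Fin n) ℂ)
    (X : Matrix (Fin n) (Fin n) ℂ) : Matrix (Fin n) (Fin n) ℂ :=
  (Pr.trace)⁻¹ • ptraceL (Pr * (thetaMap Xᴴ ⊗ₖ (1 : Matrix (Fin n) (Fin n) ℂ)))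

/-- The amplification `Φ ⊗ id_{M_k}` of a superoperator. -/
def tensorAmp {n : ℕ} (k : ℕ)
    (Φ : Matrix (Fin n) (Fin n) ℂ → Matrix (Fin n) (Fin n) ℂ)
    (M : Matrix (Fin n × Fin k) (Fin n × Fin k) ℂ) :
    Matrix (Fin n × Fin k) (Fin n × Fin k) ℂ :=
  Matrix.of fun p q => Φ (Matrix.of fun i j => M (i, p.2) (j, q.2)) p.1 q.1

/-- Complete positivity of a superoperator. -/
def IsCP {n : ℕ} (Φ : Matrix (Fin n) (Fin n) ℂ → Matrix (Fin n) (Fin n) ℂ) : Prop :=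
  ∀ (k : ℕ) (M : Matrix (Fin n × Fin k) (Fin n × Fin k) ℂ),
    M.PosSemidef → (tensorAmp k Φ M).PosSemidef

/-! ### Auxiliary lemmas -/

lemma sum_rot' {α β γ M : Type*} [Fintype α] [Fintype β] [Fintype γ] [AddCommMonoid M]
    (f : α → β → γ → M) :
    ∑ a, ∑ b, ∑ c, f a b c = ∑ c, ∑ b, ∑ a, f a b c :=
  calc ∑ a, ∑ b, ∑ c, f a b c
      = ∑ b, ∑ a, ∑ c, f a b c := Finset.sum_comm
    _ = ∑ b, ∑ c, ∑ a, f a b c := Finset.sum_congr rfl fun _ _ => Finset.sum_comm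
    _ = ∑ c, ∑ b, ∑ a, f a b c := Finset.sum_comm

lemma sum_reorder5' {α β γ δ ε M : Type*} [Fintype α] [Fintype β] [Fintype γ] [Fintype δ]
    [Fintype ε] [AddCommMonoid M] (f : α → β → γ → δ → ε → M) :
    ∑ a, ∑ b, ∑ c, ∑ e, ∑ i, f a b c e i = ∑ i, ∑ a, ∑ b, ∑ e, ∑ c, f a b c e i := by
  have h1 : ∀ a b, ∑ c, ∑ e, ∑ i, f a b c e i = ∑ i, ∑ e, ∑ c, f a b c e i :=
    fun a b => sum_rot' _
  simp_rw [h1]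
  have h2 : ∀ a, (∑ b, ∑ i, ∑ e, ∑ c, f a b c e i) = ∑ i, ∑ b, ∑ e, ∑ c, f a b c e i :=
    fun a => Finset.sum_comm
  simp_rw [h2]
  exact Finset.sum_comm

lemma psd_smul' {m : Type*} [Fintype m] {c : ℂ} (hc : 0 ≤ c) {A : Matrix m m ℂ}
    (hA : A.PosSemidef) : (c • A).PosSemidef := by
  constructor
  · have hcr : star c = c := by
      rw [Complex.star_def, Complex.conj_eq_iff_im]
      exact (Complex.nonneg_iff.1 hc).2.symm
    rw [Matrix.IsHermitian, conjTranspose_smul, hcr, hA.1.eq]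
  · intro x
    simp only [Matrix.smul_apply, smul_eq_mul]
    convert mul_nonneg hc (hA.2 x) using 1
    rw [Finsupp.mul_sum]
    refine Finsupp.sum_congr fun i _ => ?_
    rw [Finsupp.mul_sum]
    refine Finsupp.sum_congr fun j _ => ?_
    ring

lemma psd_sum' {m ι : Type*} [Fintype m] [Fintype ι] {f : ι → Matrix m m ℂ}
    (h : ∀ i, (f i).PosSemidef) : (∑ i, f i).PosSemidef := by
  classical
  refine Finset.sum_induction f _ (fun a b ha hb => ha.add hb) Matrix.PosSemidef.zero
    fun i _ => h i

lemma herm_of_nonneg' {V : Type*} [AddCommMonoid V] [Module ℂ V] (B : V → V → ℂ)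
    (hadd_l : ∀ x y z, B (x + y) z = B x z + B y z)
    (hadd_r : ∀ x y z, B x (y + z) = B x y + B x z)
    (hI_l : ∀ x y, B (Complex.I • x) y = -Complex.I * B x y)
    (hI_r : ∀ x y, B x (Complex.I • y) = Complex.I * B x y)
    (hpos : ∀ x, 0 ≤ B x x) :
    ∀ x y, B x y = (starRingEnd ℂ) (B y x) := by
  intro x y
  have d : ∀ z, (B z z).im = 0 := fun z => ((Complex.nonneg_iff.1 (hpos z)).2).symm
  have e1 : (B x y).im + (B y x).im = 0 := by
    have h := d (x + y)
    simp only [hadd_l, hadd_r] at h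
    simp only [Complex.add_im] at h
    rw [d x, d y] at h
    linarith
  have e2 : (B x y).re - (B y x).re = 0 := by
    have h := d (x + Complex.I • y)
    simp only [hadd_l, hadd_r, hI_l, hI_r] at h
    simp only [Complex.add_im, Complex.mul_im, Complex.neg_re, Complex.neg_im,
      Complex.I_re, Complex.I_im, Complex.mul_re] at h
    rw [d x, d y] at h
    ring_nf at h
    linarith
  apply Complex.ext
  · simpa [Complex.conj_re] using by linarith
  · simpa [Complex.conj_im] using by linarith

set_option maxHeartbeats 2000000 in
/-- For a reflection positive projection `Π` and an orthonormal basis `{φ_i}` of its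
range, `E(X) = Tr(Π)⁻¹ Σ_i O(φ_i) X O(φ_i)†`; in particular `E` is symmetric and
completely positive. -/
theorem Emap_kraus_form {n d : ℕ}
    (Pr : Matrix (Fin n × Fin n) (Fin n × Fin n) ℂ)
    (hPh : Prᴴ = Pr) (hPi : Pr * Pr = Pr) (hRP : IsRP Pr)
    (φ : Fin d → (Fin n × Fin n → ℂ))
    (hONB : ∀ i j, star (φ i) ⬝ᵥ φ j = if i = j then 1 else 0)
    (hrange : ∀ i, Pr *ᵥ φ i = φ i)
    (hspan : ∀ v : Fin n × Fin n → ℂ, Pr *ᵥ v = ∑ i, (star (φ i) ⬝ᵥ v) • φ i) :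
    (∀ X : Matrix (Fin n) (Fin n) ℂ,
      Emap Pr X = (Pr.trace)⁻¹ • ∑ i, Omap (φ i) * X * (Omap (φ i))ᴴ) ∧
    (∀ X Y : Matrix (Fin n) (Fin n) ℂ,
      (Emap Pr X * Y).trace = (X * Emap Pr Y).trace) ∧
    IsCP (Emap Pr) := by
  classical
  -- entries of `Pr` from the rank-one decomposition
  have keyPr : ∀ p q, Pr p q = ∑ i, φ i p * (starRingEnd ℂ) (φ i q) := by
    intro p q
    have h := congrFun (hspan (Pi.single q 1)) p
    simp [mulVec, dotProduct, Pi.single_apply, Finset.sum_apply, mul_comm] at h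
    simpa [mul_comm] using h
  -- Part 1: Kraus form
  have part1 : ∀ X : Matrix (Fin n) (Fin n) ℂ,
      Emap Pr X = (Pr.trace)⁻¹ • ∑ i, Omap (φ i) * X * (Omap (φ i))ᴴ := by
    intro X
    rw [Emap]
    congr 1
    ext b b'
    rw [Matrix.sum_apply]
    simp only [ptraceL, Matrix.of_apply, mul_apply, kroneckerMap_apply, thetaMap,
      Matrix.map_apply, conjTranspose_apply, one_apply, Omap,
      Fintype.sum_prod_type, mul_ite, mul_one, mul_zero, Finset.sum_ite_eq',
      Finset.mem_univ, if_true, keyPr, _root_.map_mul, starRingEnd_self_apply]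
    simp only [Complex.star_def, Complex.conj_conj, Finset.sum_mul, Finset.mul_sum]
    rw [sum_rot']
    refine Finset.sum_congr rfl fun i _ => Finset.sum_congr rfl fun y _ =>
      Finset.sum_congr rfl fun x _ => ?_
    ring
  -- the sesquilinear form and its properties
  set B : Matrix (Fin n) (Fin n) ℂ → Matrix (Fin n) (Fin n) ℂ → ℂ :=
    fun X Y => ∑ i, (Xᴴ * (Omap (φ i))ᴴ * Y * Omap (φ i)).trace with hBdef
  have hB : ∀ X Y : Matrix (Fin n) (Fin n) ℂ,
      (Pr * (thetaMap X ⊗ₖ Y)).trace = B X Y := by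
    intro X Y
    simp only [hBdef, trace, diag_apply, mul_apply, kroneckerMap_apply, thetaMap,
      Matrix.map_apply, conjTranspose_apply, Omap, Matrix.of_apply, keyPr,
      Fintype.sum_prod_type, Finset.sum_mul, Finset.mul_sum, Complex.star_def]
    rw [sum_reorder5']
    refine Finset.sum_congr rfl fun i _ => Finset.sum_congr rfl fun a _ =>
      Finset.sum_congr rfl fun b _ => Finset.sum_congr rfl fun e _ =>
      Finset.sum_congr rfl fun c _ => ?_
    ring
  have hBherm : ∀ X Y, B X Y = (starRingEnd ℂ) (B Y X) := by
    refine herm_of_nonneg' B ?_ ?_ ?_ ?_ ?_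
    · intro x y z
      simp [hBdef, conjTranspose_add, add_mul, mul_add, trace_add, Finset.sum_add_distrib]
    · intro x y z
      simp [hBdef, add_mul, mul_add, trace_add, Finset.sum_add_distrib]
    · intro x y
      simp [hBdef, conjTranspose_smul, smul_mul_assoc, trace_smul, Finset.mul_sum,
        Complex.star_def, Complex.conj_I, smul_eq_mul, neg_mul]
    · intro x y
      simp [hBdef, smul_mul_assoc, mul_smul_comm, trace_smul, Finset.mul_sum, smul_eq_mul]
    · intro x
      rw [← hB]
      exact hRP x
  -- Part 2: symmetry
  have part2 : ∀ X Y : Matrix (Fin n) (Fin n) ℂ,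
      (Emap Pr X * Y).trace = (X * Emap Pr Y).trace := by
    intro X Y
    have htr : ∀ Z W : Matrix (Fin n) (Fin n) ℂ,
        (Emap Pr Z * W).trace = (Pr.trace)⁻¹ * B Zᴴ W := by
      intro Z W
      rw [part1 Z, smul_mul_assoc, trace_smul, smul_eq_mul, Finset.sum_mul, trace_sum]
      congr 1
      simp only [hBdef, conjTranspose_conjTranspose]
      refine Finset.sum_congr rfl fun i _ => ?_
      simp only [mul_assoc]
      rw [trace_mul_comm (Omap (φ i)) (Z * ((Omap (φ i))ᴴ * W))]
      simp only [mul_assoc]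
    rw [htr X Y, trace_mul_comm, htr Y X]
    congr 1
    rw [hBherm Xᴴ Y]
    simp only [hBdef, map_sum, conjTranspose_conjTranspose]
    refine Finset.sum_congr rfl fun i _ => ?_
    rw [starRingEnd_apply, ← Matrix.trace_conjTranspose]
    simp only [conjTranspose_mul, conjTranspose_conjTranspose, mul_assoc]
    rw [trace_mul_comm Y ((Omap (φ i))ᴴ * (X * Omap (φ i)))]
    simp only [mul_assoc]
  refine ⟨part1, part2, ?_⟩
  -- Part 3: complete positivity
  obtain ⟨r, hr0, hrtr⟩ : ∃ r : ℝ, 0 ≤ r ∧ Pr.trace = (r : ℂ) := by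
    refine ⟨∑ p, ∑ i, Complex.normSq (φ i p), Finset.sum_nonneg fun p _ => Finset.sum_nonneg fun i _ => Complex.normSq_nonneg _, ?_⟩
    rw [trace]
    push_cast
    refine Finset.sum_congr rfl fun p _ => ?_
    rw [diag_apply, keyPr]
    exact Finset.sum_congr rfl fun i _ => (Complex.mul_conj _).symm ▸ rfl
  have hc : 0 ≤ (Pr.trace)⁻¹ := by
    rw [hrtr, ← Complex.ofReal_inv]
    exact Complex.nonneg_iff.2 ⟨by simpa using inv_nonneg.2 hr0, by simp⟩
  intro k M hM
  have amp : tensorAmp k (Emap Pr) M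
      = (Pr.trace)⁻¹ • ∑ i, (Omap (φ i) ⊗ₖ (1 : Matrix (Fin k) (Fin k) ℂ)) * M
          * ((Omap (φ i) ⊗ₖ (1 : Matrix (Fin k) (Fin k) ℂ)))ᴴ := by
    ext p q
    simp only [tensorAmp, Matrix.of_apply, part1, Matrix.smul_apply, smul_eq_mul,
      Matrix.sum_apply, mul_apply, kroneckerMap_apply, conjTranspose_apply, one_apply, Omap,
      Fintype.sum_prod_type, mul_ite, mul_zero, mul_one, ite_mul, zero_mul, one_mul,
      apply_ite (starRingEnd ℂ), map_zero,
      Finset.sum_ite_eq', Finset.sum_ite_eq, Finset.mem_univ, if_true,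
      Complex.star_def]
  rw [amp]
  exact psd_smul' hc (psd_sum' fun i => hM.mul_mul_conjTranspose_same _)
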